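/- arXiv:2002.01455 — 4 statements merged into one kernel-verified Lean document; each statement's English description precedes it below -/
import Mathlib

section
/- For a support tuple α ∈ F_{2^m}^n, a Goppa polynomial g for α, and any nonzero a ∈ F_{2^m}, the Goppa codes Γ(α, g(x)) and Γ(a·α, g(a^{-1}·x)) are equal, where a·α = (aα_1,...,aα_n). -/
/-!
Substituting `a⁻¹ X` for `X` is a ring automorphism of `F[X]`, so it preserves divisibility.
It sends each factor `X - αⱼ` to `a⁻¹ (X - a αⱼ)`, hence the Goppa sum of `c` for the support `α`
to `a^(1 - |c|)` times the Goppa sum of `c` for the support `a α`.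
-/

open Polynomial Finset

namespace Polynomial

variable {R : Type*} [CommRing R]

theorem C_mul_X_comp_C_mul_X (a b : R) : (C a * X).comp (C b * X) = C (a * b) * X := by
  rw [mul_comp, C_comp, X_comp, ← mul_assoc, ← C_mul]

theorem comp_C_mul_X_dvd_comp_C_mul_X_iff (u : Rˣ) {g p : R[X]} :
    g.comp (C (u : R) * X) ∣ p.comp (C (u : R) * X) ↔ g ∣ p := by
  have h₁ : (C (u : R) * X).comp (C (↑u⁻¹ : R) * X) = X := by
    rw [C_mul_X_comp_C_mul_X, u.mul_inv, C_1, one_mul]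
  have h₂ : (C (↑u⁻¹ : R) * X).comp (C (u : R) * X) = X := by
    rw [C_mul_X_comp_C_mul_X, u.inv_mul, C_1, one_mul]
  simpa only [algEquivOfCompEqX_apply, ← comp_eq_aeval] using
    map_dvd_iff (algEquivOfCompEqX _ _ h₁ h₂)

theorem X_sub_C_comp_C_mul_X (u : Rˣ) (x : R) :
    (X - C x).comp (C (↑u⁻¹ : R) * X) = C (↑u⁻¹ : R) * (X - C ((u : R) * x)) := by
  rw [sub_comp, X_comp, C_comp, mul_sub, ← C_mul, u.inv_mul_cancel_left]

theorem prod_X_sub_C_comp_C_mul_X {ι : Type*} (u : Rˣ) (s : Finset ι) (α : ι → R) :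
    (∏ j ∈ s, (X - C (α j))).comp (C (↑u⁻¹ : R) * X)
      = C ((↑u⁻¹ : R) ^ #s) * ∏ j ∈ s, (X - C ((u : R) * α j)) := by
  simp only [prod_comp, X_sub_C_comp_C_mul_X, prod_mul_distrib, prod_const, C_pow]

theorem sum_prod_erase_X_sub_C_comp_C_mul_X {ι : Type*} [DecidableEq ι] (u : Rˣ)
    (s : Finset ι) (α : ι → R) :
    (∑ i ∈ s, ∏ j ∈ s.erase i, (X - C (α j))).comp (C (↑u⁻¹ : R) * X)
      = C ((↑u⁻¹ : R) ^ (#s - 1)) * ∑ i ∈ s, ∏ j ∈ s.erase i, (X - C ((u : R) * α j)) := by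
  rw [sum_comp, mul_sum]
  refine sum_congr rfl fun i hi => ?_
  rw [prod_X_sub_C_comp_C_mul_X, card_erase_of_mem hi]

end Polynomial

theorem goppa_scale_support_general {n : ℕ} {F : Type*} [Field F]
    (α : Fin n → F)
    (g : Polynomial F)
    (a : F) (ha : a ≠ 0) :
    ∀ c : Fin n → ZMod 2,
      (g ∣ ∑ i ∈ Finset.univ.filter (fun i => c i = 1),
          ∏ j ∈ (Finset.univ.filter (fun i => c i = 1)).erase i, (X - C (α j)))
      ↔ (g.comp (C a⁻¹ * X) ∣ ∑ i ∈ Finset.univ.filter (fun i => c i = 1),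
          ∏ j ∈ (Finset.univ.filter (fun i => c i = 1)).erase i, (X - C (a * α j))) := by
  intro c
  let u := Units.mk0 a ha
  rw [← comp_C_mul_X_dvd_comp_C_mul_X_iff u⁻¹, sum_prod_erase_X_sub_C_comp_C_mul_X]
  exact (isUnit_C.mpr (u⁻¹.isUnit.pow _)).dvd_mul_left

/-- `Γ(α, g(x)) = Γ(a·α, g(a⁻¹·x))` for nonzero `a`, with Goppa-code membership
given by the divisibility criterion. -/
theorem goppa_scale_support {m t n : ℕ} {F : Type*} [Field F] [Fintype F] [CharP F 2]
    (hcard : Fintype.card F = 2 ^ m)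
    (α : Fin n → F) (hα : Function.Injective α)
    (g : Polynomial F) (hgdeg : g.natDegree = t) (hgα : ∀ i, g.eval (α i) ≠ 0)
    (a : F) (ha : a ≠ 0) :
    ∀ c : Fin n → ZMod 2,
      (g ∣ ∑ i ∈ Finset.univ.filter (fun i => c i = 1),
          ∏ j ∈ (Finset.univ.filter (fun i => c i = 1)).erase i, (X - C (α j)))
      ↔ (g.comp (C a⁻¹ * X) ∣ ∑ i ∈ Finset.univ.filter (fun i => c i = 1),
          ∏ j ∈ (Finset.univ.filter (fun i => c i = 1)).erase i, (X - C (a * α j))) :=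
  goppa_scale_support_general α g a ha
end

section
/- With σ̃_p(x) = ε·x^d + σ_p(x) where σ_p(x) = Π_{i∈I_p}(x - α_i), and p̃ defined by p̃_i = 1 iff σ̃_p(α_i) = 0: either p = p̃ or the intersection I_p ∩ I_{p̃} has at most one element. -/
open Polynomial

/-!
Every `α i` with `i ∈ I_p` is a root of `σ_p`, so `σ̃_p(α i) = ε · (α i)^d` there. If `ε = 0`
then `σ̃_p = σ_p`, whose roots among the distinct `α i` are exactly `I_p`. Otherwise every
`i ∈ I_p ∩ I_{p̃}` has `α i = 0`, which by injectivity of `α` leaves room for at most one index.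
-/

section

variable {ι R : Type*} [CommRing R] {α : ι → R} {s : Finset ι} {i : ι}

theorem eval_prod_X_sub_C_of_mem (hi : i ∈ s) : (∏ k ∈ s, (X - C (α k))).eval (α i) = 0 := by
  rw [eval_prod]
  exact Finset.prod_eq_zero hi (by simp)

theorem eval_prod_X_sub_C_eq_zero_iff [IsDomain R] (hα : Function.Injective α) :
    (∏ k ∈ s, (X - C (α k))).eval (α i) = 0 ↔ i ∈ s := by
  simp [eval_prod, Finset.prod_eq_zero_iff, sub_eq_zero, hα.eq_iff]

theorem eq_zero_of_mem_of_eval_C_mul_X_pow_add_prod_eq_zero [NoZeroDivisors R] {ε : R} {d : ℕ}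
    (hε : ε ≠ 0) (hi : i ∈ s)
    (hroot : (C ε * X ^ d + ∏ k ∈ s, (X - C (α k))).eval (α i) = 0) : α i = 0 := by
  rw [eval_add, eval_prod_X_sub_C_of_mem hi, add_zero, eval_mul, eval_C, eval_pow, eval_X] at hroot
  exact eq_zero_of_pow_eq_zero ((mul_eq_zero.mp hroot).resolve_left hε)

end

theorem fault_support_intersection_general {n d : ℕ} {F : Type*} [Field F] [DecidableEq F]
    (α : Fin n → F) (hα : Function.Injective α)
    (p : Fin n → ZMod 2) (ε : F) :
    Finset.univ.filter (fun i => p i = 1) =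
        Finset.univ.filter (fun i =>
          (C ε * X ^ d + ∏ k ∈ Finset.univ.filter (fun i => p i = 1), (X - C (α k))).eval (α i)
            = 0)
      ∨ ((Finset.univ.filter (fun i => p i = 1)) ∩
          (Finset.univ.filter (fun i =>
            (C ε * X ^ d + ∏ k ∈ Finset.univ.filter (fun i => p i = 1),
              (X - C (α k))).eval (α i) = 0))).card ≤ 1 := by
  by_cases hε : ε = 0
  · left
    ext i
    simp [hε, eval_prod_X_sub_C_eq_zero_iff hα]
  · right
    refine Finset.card_le_one.mpr fun a ha b hb => hα ?_
    obtain ⟨ha₁, ha₂⟩ := Finset.mem_inter.mp ha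
    obtain ⟨hb₁, hb₂⟩ := Finset.mem_inter.mp hb
    rw [eq_zero_of_mem_of_eval_C_mul_X_pow_add_prod_eq_zero hε ha₁ (Finset.mem_filter.mp ha₂).2,
      eq_zero_of_mem_of_eval_C_mul_X_pow_add_prod_eq_zero hε hb₁ (Finset.mem_filter.mp hb₂).2]

/-- With `σ̃_p(x) = ε·x^d + σ_p(x)` and `p̃` given by `p̃_i = 1 ↔ σ̃_p(α_i) = 0`,
either `p = p̃` (as supports) or `#(I_p ∩ I_{p̃}) ≤ 1`. -/
theorem fault_support_intersection {m n d : ℕ} {F : Type*} [Field F] [Fintype F] [DecidableEq F] [CharP F 2]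
    (hcard : Fintype.card F = 2 ^ m)
    (α : Fin n → F) (hα : Function.Injective α)
    (p : Fin n → ZMod 2) (ε : F) :
    Finset.univ.filter (fun i => p i = 1) =
        Finset.univ.filter (fun i =>
          (C ε * X ^ d + ∏ k ∈ Finset.univ.filter (fun i => p i = 1), (X - C (α k))).eval (α i)
            = 0)
      ∨ ((Finset.univ.filter (fun i => p i = 1)) ∩
          (Finset.univ.filter (fun i =>
            (C ε * X ^ d + ∏ k ∈ Finset.univ.filter (fun i => p i = 1),
              (X - C (α k))).eval (α i) = 0))).card ≤ 1 :=
  fault_support_intersection_general α hα p ε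
end

section
/- For a binary irreducible Goppa code: if g ∈ F_{2^m}[x] is irreducible of degree t ≥ 1 and α is a support tuple, then Γ(α, g) = Γ(α, g^2). -/
/-!
Write `f_c = ∏_{i ∈ I_c} (X - α_i)`. The polynomial `ŝ_c` is the formal derivative `f_c'`. In
characteristic 2 every second derivative vanishes, so `f_c'` only has even-degree terms; over the
perfect field `F` this makes `f_c'` a square `h²`. For the prime `g`, `g ∣ h²` forces `g ∣ h`, hence
`g² ∣ h²`.
-/

open Polynomial

theorem Polynomial.derivative_derivative_eq_zero_of_charP_two {R : Type*} [Semiring R] [CharP R 2]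
    (f : R[X]) : derivative (derivative f) = 0 := by
  ext n
  rw [coeff_derivative, coeff_derivative, coeff_zero, mul_assoc]
  have hcoeff : ((n + 1 + 1 : ℕ) : R) * ((n + 1 : ℕ) : R) = 0 := by
    rw [← Nat.cast_mul, mul_comm, CharP.cast_eq_zero_iff R 2]
    exact (Nat.even_mul_succ_self (n + 1)).two_dvd
  push_cast at hcoeff ⊢
  rw [hcoeff, mul_zero]

theorem Polynomial.exists_derivative_eq_sq_of_charP_two {R : Type*} [CommRing R]
    [NoZeroDivisors R] [CharP R 2] [PerfectRing R 2] (f : R[X]) :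
    ∃ h : R[X], derivative f = h ^ 2 := by
  refine ⟨(contract 2 (derivative f)).map (frobeniusEquiv R 2).symm, ?_⟩
  rw [← polynomial_expand_eq,
    expand_contract 2 (derivative_derivative_eq_zero_of_charP_two f) two_ne_zero]

theorem Polynomial.sum_prod_erase_X_sub_C {R ι : Type*} [CommRing R] [DecidableEq ι]
    (s : Finset ι) (a : ι → R) :
    ∑ i ∈ s, ∏ j ∈ s.erase i, (X - C (a j)) = derivative (∏ j ∈ s, (X - C (a j))) := by
  simp [derivative_prod_finset]

theorem Prime.dvd_sq_iff_sq_dvd_sq {M : Type*} [CommMonoidWithZero M] {p : M} (hp : Prime p)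
    (a : M) : p ∣ a ^ 2 ↔ p ^ 2 ∣ a ^ 2 :=
  ⟨fun h ↦ pow_dvd_pow_of_dvd (hp.dvd_of_dvd_pow h) 2, (dvd_pow_self p two_ne_zero).trans⟩

theorem goppa_irreducible_square_general {n : ℕ} {F : Type*} [Field F] [Fintype F] [CharP F 2]
    (α : Fin n → F)
    (g : Polynomial F) (hgirr : Irreducible g) :
    ∀ c : Fin n → ZMod 2,
      (g ∣ ∑ i ∈ Finset.univ.filter (fun i => c i = 1),
          ∏ j ∈ (Finset.univ.filter (fun i => c i = 1)).erase i, (X - C (α j)))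
      ↔ (g ^ 2 ∣ ∑ i ∈ Finset.univ.filter (fun i => c i = 1),
          ∏ j ∈ (Finset.univ.filter (fun i => c i = 1)).erase i, (X - C (α j))) := by
  intro c
  obtain ⟨h, hh⟩ := exists_derivative_eq_sq_of_charP_two
    (∏ j ∈ Finset.univ.filter (fun i => c i = 1), (X - C (α j)))
  rw [sum_prod_erase_X_sub_C, hh]
  exact hgirr.prime.dvd_sq_iff_sq_dvd_sq h

/-- For a binary irreducible Goppa code: `Γ(α,g) = Γ(α,g²)`. -/
theorem goppa_irreducible_square {m t n : ℕ} {F : Type*} [Field F] [Fintype F] [CharP F 2]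
    (hcard : Fintype.card F = 2 ^ m)
    (α : Fin n → F) (hα : Function.Injective α)
    (g : Polynomial F) (hgirr : Irreducible g) (hgdeg : g.natDegree = t) (ht : 1 ≤ t)
    (hgα : ∀ i, g.eval (α i) ≠ 0) :
    ∀ c : Fin n → ZMod 2,
      (g ∣ ∑ i ∈ Finset.univ.filter (fun i => c i = 1),
          ∏ j ∈ (Finset.univ.filter (fun i => c i = 1)).erase i, (X - C (α j)))
      ↔ (g ^ 2 ∣ ∑ i ∈ Finset.univ.filter (fun i => c i = 1),
          ∏ j ∈ (Finset.univ.filter (fun i => c i = 1)).erase i, (X - C (α j))) :=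
  goppa_irreducible_square_general α g hgirr
end

section
/- GoppaGCD soundness (core step): let C ⊆ F_2^n be generated by {c_1,...,c_k}, α̃ a support tuple, and g̃ = gcd(ŝ_{c_1,α̃},...,ŝ_{c_k,α̃}) with ŝ_{c,α̃}(x) = Σ_{i∈I_c} Π_{j∈I_c\{i}}(x − α̃_j). If g̃(α̃_i) ≠ 0 for all i, then C ⊆ Γ(α̃, g̃). -/
/-!
The polynomial `ŝ_{c,α̃}` is the formal derivative of the locator `L_c = ∏_{i ∈ I_c} (X - α̃_i)`.
For two words, `L_c * L_{c'} = L_{c+c'} * L_{I_c ∩ I_{c'}}²`, and in characteristic 2 a square has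
zero derivative, so `(L_c * L_{c'})' = L_{c+c'}' * L_{I_c ∩ I_{c'}}²`. If `g̃` divides `L_c'` and
`L_{c'}'` it divides the left side, and as `g̃` has no root among the `α̃_i` it is coprime to the
square, hence divides `L_{c+c'}'`. So `Γ(α̃, g̃)` is closed under addition and contains the span.
-/

open Polynomial
open scoped symmDiff

namespace Polynomial

section Locator

variable {R ι : Type*} [CommRing R] (α : ι → R)

noncomputable def locator (S : Finset ι) : R[X] := ∏ i ∈ S, (X - C (α i))

theorem derivative_locator [DecidableEq ι] (S : Finset ι) :
    derivative (locator α S) = ∑ i ∈ S, ∏ j ∈ S.erase i, (X - C (α j)) := by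
  simp [locator, derivative_prod_finset]

theorem locator_mul_locator [DecidableEq ι] (I J : Finset ι) :
    locator α I * locator α J = locator α (I ∆ J) * locator α (I ∩ J) ^ 2 := by
  have hunion : I ∪ J = I ∆ J ∪ I ∩ J := (symmDiff_sup_inf I J).symm
  have hdisj : Disjoint (I ∆ J) (I ∩ J) := disjoint_symmDiff_inf I J
  rw [locator, locator, ← Finset.prod_union_inter, hunion, Finset.prod_union hdisj]
  simp only [locator, sq, mul_assoc]

theorem isCoprime_locator {F : Type*} [Field F] {α : ι → F} {g : F[X]}
    (hg : ∀ i, g.eval (α i) ≠ 0) (S : Finset ι) : IsCoprime g (locator α S) :=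
  IsCoprime.prod_right fun i _ => ((irreducible_X_sub_C (α i)).coprime_iff_not_dvd.mpr
    fun h => hg i (dvd_iff_isRoot.mp h)).symm

end Locator

theorem derivative_sq_eq_zero {R : Type*} [CommRing R] [CharP R 2] (p : R[X]) :
    derivative (p ^ 2) = 0 := by
  rw [derivative_sq, CharTwo.two_eq_zero, C_0, zero_mul, zero_mul]

theorem dvd_derivative_locator_symmDiff {ι F : Type*} [DecidableEq ι] [Field F] [CharP F 2]
    {α : ι → F} {g : F[X]} (hg : ∀ i, g.eval (α i) ≠ 0) {I J : Finset ι}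
    (hI : g ∣ derivative (locator α I)) (hJ : g ∣ derivative (locator α J)) :
    g ∣ derivative (locator α (I ∆ J)) := by
  have hprod : g ∣ derivative (locator α I * locator α J) := by
    rw [derivative_mul]
    exact dvd_add (hI.mul_right _) (hJ.mul_left _)
  rw [locator_mul_locator, derivative_mul, derivative_sq_eq_zero, mul_zero, add_zero] at hprod
  exact (isCoprime_locator hg _).pow_right.dvd_of_dvd_mul_right hprod

end Polynomial

theorem filter_add_eq_one_eq_symmDiff {ι : Type*} [Fintype ι] [DecidableEq ι]
    (x y : ι → ZMod 2) :
    Finset.univ.filter (fun i => (x + y) i = 1) =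
      Finset.univ.filter (fun i => x i = 1) ∆ Finset.univ.filter (fun i => y i = 1) := by
  have hadd : ∀ a b : ZMod 2, a + b = 1 ↔ a = 1 ∧ b ≠ 1 ∨ b = 1 ∧ a ≠ 1 := by decide
  ext i
  simp [Finset.mem_symmDiff, hadd]

theorem goppaGCD_sound_general {n k : ℕ} {F : Type*} [Field F] [CharP F 2]
    (αt : Fin n → F)
    (c : Fin k → (Fin n → ZMod 2))
    (gt : Polynomial F)
    (hdvd : ∀ l : Fin k, gt ∣ ∑ i ∈ Finset.univ.filter (fun i => c l i = 1),
        ∏ j ∈ (Finset.univ.filter (fun i => c l i = 1)).erase i, (X - C (αt j)))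
    (hgα : ∀ i, gt.eval (αt i) ≠ 0) :
    ∀ v ∈ Submodule.span (ZMod 2) (Set.range c),
      gt ∣ ∑ i ∈ Finset.univ.filter (fun i => v i = 1),
        ∏ j ∈ (Finset.univ.filter (fun i => v i = 1)).erase i, (X - C (αt j)) := by
  simp_rw [← derivative_locator] at hdvd ⊢
  intro v hv
  induction hv using Submodule.span_induction with
  | mem x hx =>
    obtain ⟨l, rfl⟩ := hx
    exact hdvd l
  | zero => simp [locator]
  | add x y _ _ hx hy =>
    rw [filter_add_eq_one_eq_symmDiff]
    exact dvd_derivative_locator_symmDiff hgα hx hy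
  | smul a x _ hx =>
    obtain rfl | rfl : a = 0 ∨ a = 1 := by revert a; decide
    · simp [locator]
    · simpa using hx

/-- GoppaGCD soundness (core step): if `g̃` divides each `ŝ_{c_l,α̃}` for a spanning family
`c_1,…,c_k` of `C` (as the gcd does) and `g̃(α̃_i) ≠ 0` for all `i`, then `C ⊆ Γ(α̃,g̃)`. -/
theorem goppaGCD_sound {m n k : ℕ} {F : Type*} [Field F] [Fintype F] [CharP F 2]
    (hcard : Fintype.card F = 2 ^ m)
    (αt : Fin n → F) (hαt : Function.Injective αt)
    (c : Fin k → (Fin n → ZMod 2))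
    (gt : Polynomial F)
    (hdvd : ∀ l : Fin k, gt ∣ ∑ i ∈ Finset.univ.filter (fun i => c l i = 1),
        ∏ j ∈ (Finset.univ.filter (fun i => c l i = 1)).erase i, (X - C (αt j)))
    (hgα : ∀ i, gt.eval (αt i) ≠ 0) :
    ∀ v ∈ Submodule.span (ZMod 2) (Set.range c),
      gt ∣ ∑ i ∈ Finset.univ.filter (fun i => v i = 1),
        ∏ j ∈ (Finset.univ.filter (fun i => v i = 1)).erase i, (X - C (αt j)) :=
  goppaGCD_sound_general αt c gt hdvd hgα
end
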